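/- arXiv:1307.1353 — 3 statements merged into one kernel-verified Lean document; each statement's English description precedes it below -/
import Mathlib

section
/- For each d ≥ 0: (1) ℱ_d ⋠ 𝒯_d, and (2) 𝒯_{d+1} ⋠ ℱ_d. -/
open SimpleGraph

/-- The reflexive closure of the adjacency relation of a graph. -/
def reflAdj {α : Type} (G : SimpleGraph α) (a b : α) : Prop := a = b ∨ G.Adj a b

/-- A set of vertices induces a connected subgraph of `G`. -/
def ConnSet {α : Type} (G : SimpleGraph α) (s : Set α) : Prop := (G.induce s).Connected

/-- `B` is an `H`-deconstruction of `G`: coverage and connectivity. -/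
def IsDeconstruction {α β : Type} (G : SimpleGraph α) (H : SimpleGraph β)
    (B : β → Set α) : Prop :=
  (∀ g g' : α, reflAdj G g g' →
      ∃ h h' : β, reflAdj H h h' ∧ g ∈ B h ∪ B h' ∧ g' ∈ B h ∪ B h') ∧
  (∀ g : α, ConnSet H {h | g ∈ B h})

/-- The family `B` (viewed as an `H`-indexed family of bags) has width at most `w`. -/
def DeconWidthLE {α β : Type} (H : SimpleGraph β) (B : β → Set α) (w : ℕ) : Prop :=
  ∀ h h' : β, reflAdj H h h' → (B h ∪ B h').ncard ≤ w

/-- `B` is an `H`-decomposition of `G`: each (refl-)edge inside a single bag, plus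
connectivity. -/
def IsDecomposition {α β : Type} (G : SimpleGraph α) (H : SimpleGraph β)
    (B : β → Set α) : Prop :=
  (∀ g g' : α, reflAdj G g g' → ∃ h : β, g ∈ B h ∧ g' ∈ B h) ∧
  (∀ g : α, ConnSet H {h | g ∈ B h})

/-- A finite simple graph, presented on a vertex set `Fin n`. -/
structure FinGraph where
  n : ℕ
  G : SimpleGraph (Fin n)

/-- `𝒢 ≼ ℋ` : every graph in `𝒢` has an `H`-deconstruction of width `≤ w`
for some `H ∈ ℋ`, for a uniform constant `w`. -/
def DeconLE (𝒢 ℋ : Set FinGraph) : Prop :=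
  ∃ w : ℕ, ∀ G ∈ 𝒢, ∃ H ∈ ℋ, ∃ B : Fin H.n → Set (Fin G.n),
    IsDeconstruction G.G H.G B ∧ DeconWidthLE H.G B w

/-- `𝒢 ≡ ℋ`. -/
def DeconEquiv (𝒢 ℋ : Set FinGraph) : Prop := DeconLE 𝒢 ℋ ∧ DeconLE ℋ 𝒢

/-- `𝒢 ≺ ℋ`. -/
def DeconLT (𝒢 ℋ : Set FinGraph) : Prop := DeconLE 𝒢 ℋ ∧ ¬ DeconEquiv 𝒢 ℋ

/-- `μ` is a minor map from `M` to `G`. -/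
def IsMinorMap {α β : Type} (M : SimpleGraph α) (G : SimpleGraph β)
    (μ : α → Set β) : Prop :=
  (∀ m : α, ConnSet G (μ m)) ∧
  (∀ m m' : α, m ≠ m' → Disjoint (μ m) (μ m')) ∧
  (∀ m m' : α, M.Adj m m' → ∃ g ∈ μ m, ∃ g' ∈ μ m', G.Adj g g')

/-- `M` is a minor of `G`. -/
def IsMinor (M G : FinGraph) : Prop :=
  ∃ μ : Fin M.n → Set (Fin G.n), IsMinorMap M.G G.G μ

/-- The class of all minors of graphs in `𝒢`. -/
def minorsCl (𝒢 : Set FinGraph) : Set FinGraph := {M | ∃ G ∈ 𝒢, IsMinor M G}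

/-- The (connected) graph `G`, viewed as a tree, has height at most `d`:
some rooting puts every vertex within distance `d` of the root. -/
def treeHeightLE (G : FinGraph) (d : ℕ) : Prop :=
  ∃ r : Fin G.n, ∀ v : Fin G.n, G.G.dist r v ≤ d

/-- Every connected component of `G` has height at most `d`. -/
def forestHeightLE (G : FinGraph) (d : ℕ) : Prop :=
  ∀ v : Fin G.n, ∃ r : Fin G.n, G.G.Reachable r v ∧
    ∀ u : Fin G.n, G.G.Reachable r u → G.G.dist r u ≤ d

/-- `ℒ` : the class of all finite simple graphs. -/
def classL : Set FinGraph := Set.univ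

/-- `𝒯` : the class of all finite trees. -/
def classT : Set FinGraph := {G | G.G.IsTree}

/-- `𝒫` : the class of all finite paths (on at least two vertices). -/
def classP : Set FinGraph := {G | ∃ m : ℕ, 2 ≤ m ∧ Nonempty (G.G ≃g pathGraph m)}

/-- `𝒯_d` : all finite trees of height at most `d`. -/
def classTd (d : ℕ) : Set FinGraph := {G | G.G.IsTree ∧ treeHeightLE G d}

/-- `ℱ_d` : all finite forests of height at most `d`. -/
def classFd (d : ℕ) : Set FinGraph := {G | G.G.IsAcyclic ∧ forestHeightLE G d}

/-- The complete `k`-ary tree `T_{h,k}` of height `h`, on strings over `[k]` of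
length at most `h`; each string of length `< h` is joined to its one-symbol extensions. -/
def kAryTree (h k : ℕ) : SimpleGraph {l : List (Fin k) // l.length ≤ h} :=
  SimpleGraph.fromRel (fun a b => ∃ i : Fin k, b.1 = i :: a.1)

/-- For every `k ≥ 1`, the tree `T_{h,k}` is a minor of some graph in `𝒢`. -/
def StackAll (𝒢 : Set FinGraph) (h : ℕ) : Prop :=
  ∀ k : ℕ, 1 ≤ k → ∃ G ∈ 𝒢, ∃ μ : {l : List (Fin k) // l.length ≤ h} → Set (Fin G.n),
    IsMinorMap (kAryTree h k) G.G μ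

/-- `𝒢` has stack depth (exactly) `d`. -/
def HasStackDepth (𝒢 : Set FinGraph) (d : ℕ) : Prop :=
  StackAll 𝒢 d ∧ ¬ StackAll 𝒢 (d + 1)

/-- The tree depth of `G` is at most `h`: there is a rooted forest on the vertex
set of `G` (given by a parent function whose fixed points are the roots) of height
at most `h` whose (ancestor-descendant) closure contains all edges of `G`. -/
def TreeDepthLE {α : Type} (G : SimpleGraph α) (h : ℕ) : Prop :=
  ∃ par : α → α,
    (∀ v : α, par (par^[h] v) = par^[h] v) ∧
    (∀ u v : α, G.Adj u v → (∃ k : ℕ, par^[k] u = v) ∨ (∃ k : ℕ, par^[k] v = u))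

/-- The class `𝒢` has bounded tree depth. -/
def HasBoundedTreeDepth (𝒢 : Set FinGraph) : Prop :=
  ∃ h : ℕ, ∀ G ∈ 𝒢, TreeDepthLE G.G h

/-- The class `𝒢` has bounded treewidth (via tree decompositions). -/
def HasBoundedTreewidth (𝒢 : Set FinGraph) : Prop :=
  ∃ w : ℕ, ∀ G ∈ 𝒢, ∃ H : FinGraph, H.G.IsTree ∧
    ∃ B : Fin H.n → Set (Fin G.n), IsDecomposition G.G H.G B ∧ ∀ h, (B h).ncard ≤ w + 1

/-- The class `𝒢` has bounded pathwidth (via path decompositions). -/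
def HasBoundedPathwidth (𝒢 : Set FinGraph) : Prop :=
  ∃ w : ℕ, ∀ G ∈ 𝒢, ∃ H : FinGraph, H ∈ classP ∧
    ∃ B : Fin H.n → Set (Fin G.n), IsDecomposition G.G H.G B ∧ ∀ h, (B h).ncard ≤ w + 1

/-- A finite rooted tree. -/
structure RootedFinTree where
  n : ℕ
  G : SimpleGraph (Fin n)
  isTree : G.IsTree
  root : Fin n

/-- `c` is a child of `p` in the rooted tree `T`. -/
def RootedFinTree.IsChild (T : RootedFinTree) (p c : Fin T.n) : Prop :=
  T.G.Adj p c ∧ T.G.dist T.root c = T.G.dist T.root p + 1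

/-- `a` is an ancestor of `v` in the rooted tree `T` (i.e. `a` lies on the unique
path from the root to `v`). -/
def RootedFinTree.Ancestor (T : RootedFinTree) (a v : Fin T.n) : Prop :=
  T.G.dist T.root v = T.G.dist T.root a + T.G.dist a v

/-- `(μ m)_{m}` is a nice `M`-deconstruction of `G`, for rooted trees `M`, `G`. -/
def IsNiceDecon (M G : RootedFinTree) (μ : Fin M.n → Set (Fin G.n)) : Prop :=
  IsDeconstruction G.G M.G μ ∧
  IsMinorMap M.G G.G μ ∧
  G.root ∈ μ M.root ∧
  (∀ (m m' : Fin M.n) (g g' : Fin G.n),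
    M.IsChild m m' → g ∈ μ m → g' ∈ μ m' → G.G.Adj g g' → G.IsChild g g')

/-- The node `u` of the rooted tree `T` has property `P(d,k)`. -/
def PropP (T : RootedFinTree) (k : ℕ) : ℕ → Fin T.n → Prop
  | 0, _ => True
  | d + 1, u => ∃ s : Finset (Fin T.n), s.card = k ∧
      (∀ v ∈ s, T.Ancestor u v) ∧
      (∀ v ∈ s, ∀ w ∈ s, v ≠ w → ¬ T.Ancestor v w ∧ ¬ T.Ancestor w v) ∧
      (∀ v ∈ s, PropP T k d v)

/-!
Write `k = w + 1`, let `T_{d,k}` be the complete `k`-ary tree of height `d` and `F_{d,k}` the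
forest of `k` disjoint copies of it, so that `F_{d,k} ∈ ℱ_d` and `T_{d+1,k} ∈ 𝒯_{d+1}`. By
induction on `d`: (A_d) `F_{d,k}` has no deconstruction of width `≤ w` over a tree of height
`≤ d`, and (B_d) `T_{d+1,k}` has none over a forest of height `≤ d`.

For (A_d), the bag of the host root has at most `w` vertices, so it misses one of the `k` trees of
`F_{d,k}`. If `d = 0` the root is the only host vertex, so its bag contains every vertex, which is
absurd. For (A_{d+1}), restricting to the missed tree and cutting the root off the host gives a
deconstruction of `T_{d+1,k}` over a forest of height `≤ d`, contradicting (B_d). For (B_d), the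
bags meeting the connected graph `T_{d+1,k}` all lie in one component of the host, a tree of
height `≤ d`; restricting to it, and pulling back along the embedding of `F_{d,k}` onto the
branches of `T_{d+1,k}` below its root, contradicts (A_d).
-/

namespace SimpleGraph

variable {α β : Type} {G : SimpleGraph α} {G' : SimpleGraph β} {H : SimpleGraph β} {d : ℕ}

def HeightLE (G : SimpleGraph α) (d : ℕ) : Prop :=
  ∃ r, ∀ v, G.dist r v ≤ d

def ComponentHeightLE (G : SimpleGraph α) (d : ℕ) : Prop :=
  ∀ v, ∃ r, G.Reachable r v ∧ ∀ u, G.Reachable r u → G.dist r u ≤ d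

lemma Hom.dist_le (f : G →g G') {u v : α} (h : G.Reachable u v) :
    G'.dist (f u) (f v) ≤ G.dist u v := by
  obtain ⟨W, hW⟩ := h.exists_walk_length_eq_dist
  simpa [hW] using SimpleGraph.dist_le (W.map f)

lemma Iso.dist_eq (φ : G ≃g G') (u v : α) : G'.dist (φ u) (φ v) = G.dist u v := by
  by_cases h : G.Reachable u v
  · refine le_antisymm (φ.toHom.dist_le h) ?_
    simpa using φ.symm.toHom.dist_le (φ.reachable_iff.2 h)
  · rw [dist_eq_zero_of_not_reachable h,
      dist_eq_zero_of_not_reachable (mt φ.reachable_iff.1 h)]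

lemma HeightLE.of_iso (h : G.HeightLE d) (φ : G ≃g G') : G'.HeightLE d := by
  obtain ⟨r, hr⟩ := h
  exact ⟨φ r, fun v => by rw [← φ.apply_symm_apply v, φ.dist_eq]; exact hr _⟩

lemma ComponentHeightLE.of_iso (h : G.ComponentHeightLE d) (φ : G ≃g G') :
    G'.ComponentHeightLE d := by
  intro v
  obtain ⟨r, hrv, hr⟩ := h (φ.symm v)
  refine ⟨φ r, by simpa using φ.reachable_iff.2 hrv, fun u hu => ?_⟩
  rw [← φ.apply_symm_apply u, φ.dist_eq]
  exact hr _ (by simpa using φ.symm.reachable_iff.2 hu)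

lemma exists_iso_fin [Finite α] (G : SimpleGraph α) :
    ∃ (n : ℕ) (G' : SimpleGraph (Fin n)), Nonempty (G' ≃g G) := by
  obtain ⟨n, ⟨e⟩⟩ := Finite.exists_equiv_fin α
  exact ⟨n, _, ⟨Iso.comap e.symm G⟩⟩

lemma IsTree.length_eq_dist (hH : H.IsTree) {u v : β} {p : H.Walk u v} (hp : p.IsPath) :
    p.length = H.dist u v := by
  obtain ⟨q, hq, hlen⟩ := hH.connected.exists_path_of_dist u v
  rw [← hlen]
  exact congrArg (fun p : H.Path u v => p.1.length)
    ((hH.isAcyclic.subsingleton_path u v).elim ⟨p, hp⟩ ⟨q, hq⟩)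

lemma eq_of_reachable_deleteIncidenceSet {r u : β}
    (h : (H.deleteIncidenceSet r).Reachable r u) : u = r := by
  obtain ⟨W⟩ := h
  cases W with
  | nil => rfl
  | cons hadj _ => exact absurd rfl (deleteIncidenceSet_adj.1 hadj).2.1

lemma reachable_deleteIncidenceSet_of_notMem_support {r u v : β} (p : H.Walk u v)
    (hp : r ∉ p.support) : (H.deleteIncidenceSet r).Reachable u v := by
  induction p with
  | nil => exact .rfl
  | cons hadj q ih =>
    simp only [Walk.support_cons, List.mem_cons, not_or] at hp
    have hadj' : (H.deleteIncidenceSet r).Adj _ _ :=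
      deleteIncidenceSet_adj.2 ⟨hadj, Ne.symm hp.1, fun h => hp.2 (h ▸ q.start_mem_support)⟩
    exact hadj'.reachable.trans (ih hp.2)

lemma IsTree.componentHeightLE_deleteIncidenceSet (hH : H.IsTree) {r : β}
    (hr : ∀ v, H.dist r v ≤ d + 1) : (H.deleteIncidenceSet r).ComponentHeightLE d := by
  classical
  intro v
  by_cases hv : v = r
  · subst hv
    refine ⟨v, .rfl, fun u hu => ?_⟩
    simp [eq_of_reachable_deleteIncidenceSet hu]
  -- the component of `v` is rooted at the child `p.snd` of `r` on the path from `r` to `v`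
  obtain ⟨p, hp, -⟩ := hH.connected.exists_path_of_dist r v
  have hnil : ¬ p.Nil := Walk.not_nil_of_ne (Ne.symm hv)
  have hrc : H.Adj r p.snd := p.adj_snd hnil
  have hr_tail : r ∉ p.tail.support := by
    have := hp.support_nodup
    rw [← p.cons_support_tail hnil] at this
    exact (List.nodup_cons.1 this).1
  refine ⟨p.snd, reachable_deleteIncidenceSet_of_notMem_support p.tail hr_tail, fun u hu => ?_⟩
  obtain ⟨q, hq⟩ := hu.exists_walk_length_eq_dist
  have hq_avoid : r ∉ q.support := fun hmem =>
    hrc.ne (eq_of_reachable_deleteIncidenceSet (q.takeUntil r hmem).reachable.symm).symm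
  have hpath : (Walk.cons hrc (q.mapLe (deleteIncidenceSet_le H r))).IsPath :=
    ((q.isPath_of_length_eq_dist hq).mapLe _).cons (by simpa [Walk.support_mapLe_eq_support])
  have hlen := hH.length_eq_dist hpath
  simp only [Walk.length_cons, Walk.length_mapLe, hq] at hlen
  have := hr u
  omega

lemma exists_walk_induce_reachable {c x : β} (hx : H.Reachable c x) :
    ∃ W : (H.induce {v | H.Reachable c v}).Walk ⟨c, .rfl⟩ ⟨x, hx⟩,
      W.length = H.dist c x := by
  classical
  obtain ⟨p, hp⟩ := hx.exists_walk_length_eq_dist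
  have hsupp : ∀ z ∈ p.support, H.Reachable c z := fun z hz => ⟨p.takeUntil z hz⟩
  refine ⟨p.induce {v | H.Reachable c v} hsupp, ?_⟩
  have hlen := congrArg Walk.length (p.map_induce (s := {v | H.Reachable c v}) hsupp)
  rw [Walk.length_map] at hlen
  exact hlen.trans hp

lemma connected_induce_reachable (c : β) : (H.induce {v | H.Reachable c v}).Connected := by
  refine (connected_iff_exists_forall_reachable _).2 ⟨⟨c, .rfl⟩, fun ⟨x, hx⟩ => ?_⟩
  obtain ⟨W, -⟩ := exists_walk_induce_reachable hx
  exact W.reachable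

lemma heightLE_induce_reachable {c : β} (hc : ∀ u, H.Reachable c u → H.dist c u ≤ d) :
    (H.induce {v | H.Reachable c v}).HeightLE d := by
  refine ⟨⟨c, .rfl⟩, fun ⟨x, hx⟩ => ?_⟩
  obtain ⟨W, hW⟩ := exists_walk_induce_reachable hx
  exact (dist_le W).trans (hW ▸ hc x hx)

/-- On a cycle, the vertex maximising `f` has two distinct neighbours, neither of them of larger
`f`-value. -/
lemma isAcyclic_of_adj_le_eq (f : α → ℕ)
    (hf : ∀ v u u', G.Adj v u → G.Adj v u' → f u ≤ f v → f u' ≤ f v → u = u') :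
    G.IsAcyclic := by
  classical
  intro v c hc
  obtain ⟨m, hm, hmax⟩ := c.support.toFinset.exists_max_image f ⟨v, by simp⟩
  rw [List.mem_toFinset] at hm
  set c' := c.rotate m hm
  have hc' : c'.IsCycle := hc.rotate hm
  have hnil : ¬ c'.Nil := hc'.not_nil
  have le_m : ∀ i, f (c'.getVert i) ≤ f m := fun i =>
    hmax _ (List.mem_toFinset.2 ((c.mem_support_rotate_iff m hm).1 (c'.getVert_mem_support i)))
  exact hc'.snd_ne_penultimate
    (hf m _ _ (c'.adj_snd hnil) (c'.adj_penultimate hnil).symm (le_m 1) (le_m _))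

lemma componentHeightLE_bot_boxProd {ι : Type} (hG : G.Connected) (h : G.HeightLE d) :
    ((⊥ : SimpleGraph ι) □ G).ComponentHeightLE d := by
  obtain ⟨r, hr⟩ := h
  rintro ⟨i, a⟩
  refine ⟨(i, r), reachable_boxProd.2 ⟨.rfl, hG.preconnected r a⟩, fun ⟨j, b⟩ hu => ?_⟩
  obtain rfl : i = j := reachable_bot.1 (reachable_boxProd.1 hu).1
  simpa [SimpleGraph.dist, edist_boxProd] using hr b

end SimpleGraph

section Deconstruction

variable {α α' β : Type} {G : SimpleGraph α} {G' : SimpleGraph α'} {H : SimpleGraph β}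
  {B : β → Set α} {w : ℕ}

def HasDeconOfWidth (G : SimpleGraph α) (H : SimpleGraph β) (w : ℕ) : Prop :=
  ∃ B : β → Set α, IsDeconstruction G H B ∧ DeconWidthLE H B w

lemma reflAdj.reachable {a b : β} : reflAdj H a b → H.Reachable a b := by
  rintro (rfl | h)
  exacts [.rfl, h.reachable]

lemma reflAdj.mono {H' : SimpleGraph β} (hle : H ≤ H') {a b : β} :
    reflAdj H a b → reflAdj H' a b :=
  Or.imp_right (@hle a b)

lemma ConnSet.reachable {s : Set β} (hs : ConnSet H s) {x y : β} (hx : x ∈ s) (hy : y ∈ s) :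
    H.Reachable x y := by
  simpa using (hs.preconnected ⟨x, hx⟩ ⟨y, hy⟩).map (Embedding.induce s).toHom

lemma IsDeconstruction.exists_mem (hB : IsDeconstruction G H B) (g : α) : ∃ h, g ∈ B h := by
  obtain ⟨⟨h, hg⟩⟩ := (hB.2 g).nonempty
  exact ⟨h, hg⟩

lemma IsDeconstruction.reachable (hB : IsDeconstruction G H B) (hG : G.Preconnected)
    {g g' : α} {h h' : β} (hg : g ∈ B h) (hg' : g' ∈ B h') : H.Reachable h h' := by
  have adj_step : ∀ {x y : α} {k k' : β}, G.Adj x y → x ∈ B k → y ∈ B k' →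
      H.Reachable k k' := by
    intro x y k k' hxy hx hy
    obtain ⟨l, l', hll', hxl, hyl⟩ := hB.1 x y (Or.inr hxy)
    have to_l : ∀ {z m}, z ∈ B m → z ∈ B l ∪ B l' → H.Reachable m l := by
      rintro z m hz (hzl | hzl')
      · exact (hB.2 z).reachable hz hzl
      · exact ((hB.2 z).reachable hz hzl').trans hll'.reachable.symm
    exact (to_l hx hxl).trans (to_l hy hyl).symm
  obtain ⟨W⟩ := hG g g'
  induction W generalizing h with
  | nil => exact (hB.2 _).reachable hg hg'
  | cons hxy W ih =>
    obtain ⟨k, hk⟩ := hB.exists_mem _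
    exact (adj_step hxy hg hk).trans (ih hk hg')

lemma IsDeconstruction.comap (hB : IsDeconstruction G H B) (f : G' →g G) :
    IsDeconstruction G' H (fun h => f ⁻¹' B h) := by
  refine ⟨fun g g' hgg' => hB.1 (f g) (f g') ?_, fun g => hB.2 (f g)⟩
  rcases hgg' with rfl | hadj
  exacts [Or.inl rfl, Or.inr (f.map_adj hadj)]

lemma DeconWidthLE.comap [Finite α] (hB : DeconWidthLE H B w) {f : α' → α}
    (hf : Function.Injective f) : DeconWidthLE H (fun h => f ⁻¹' B h) w := fun h h' hhh' =>
  calc (f ⁻¹' B h ∪ f ⁻¹' B h').ncard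
      ≤ (B h ∪ B h').ncard :=
        Set.ncard_le_ncard_of_injOn f (fun _ hx => hx) hf.injOn (Set.toFinite _)
    _ ≤ w := hB h h' hhh'

lemma HasDeconOfWidth.comap [Finite α] (hG : HasDeconOfWidth G H w) (f : G' →g G)
    (hf : Function.Injective f) : HasDeconOfWidth G' H w := by
  obtain ⟨B, hB, hBw⟩ := hG
  exact ⟨_, hB.comap f, hBw.comap hf⟩

lemma DeconWidthLE.mono {H' : SimpleGraph β} (hle : H' ≤ H) (hB : DeconWidthLE H B w) :
    DeconWidthLE H' B w :=
  fun h h' hhh' => hB h h' (reflAdj.mono hle hhh')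

lemma IsDeconstruction.deleteIncidenceSet (hB : IsDeconstruction G H B) {r : β}
    (hr : B r = ∅) : IsDeconstruction G (H.deleteIncidenceSet r) B := by
  have ne_r : ∀ {g h}, g ∈ B h → h ≠ r := by
    rintro g h hg rfl
    simp [hr] at hg
  refine ⟨fun g g' hgg' => ?_, fun g => ?_⟩
  · obtain ⟨h, h', hhh' | hhh', hg, hg'⟩ := hB.1 g g' hgg'
    · exact ⟨h, h', Or.inl hhh', hg, hg'⟩
    by_cases hh : h = r
    · subst hh
      simp only [hr, Set.empty_union] at hg hg'
      exact ⟨h', h', Or.inl rfl, Or.inl hg, Or.inl hg'⟩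
    by_cases hh' : h' = r
    · subst hh'
      simp only [hr, Set.union_empty] at hg hg'
      exact ⟨h, h, Or.inl rfl, Or.inl hg, Or.inl hg'⟩
    exact ⟨h, h', Or.inr (deleteIncidenceSet_adj.2 ⟨hhh', hh, hh'⟩), hg, hg'⟩
  · have same : (H.deleteIncidenceSet r).induce {h | g ∈ B h} = H.induce {h | g ∈ B h} := by
      ext ⟨x, hx⟩ ⟨y, hy⟩
      simp [deleteIncidenceSet_adj, ne_r hx, ne_r hy]
    unfold ConnSet
    rw [same]
    exact hB.2 g

lemma IsDeconstruction.induce (hB : IsDeconstruction G H B) {S : Set β}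
    (hS : ∀ h ∉ S, B h = ∅) : IsDeconstruction G (H.induce S) (fun h => B h) := by
  have mem_S : ∀ {g h}, g ∈ B h → h ∈ S := fun {g h} hg => by
    by_contra hh
    simp [hS h hh] at hg
  refine ⟨fun g g' hgg' => ?_, fun g => ?_⟩
  · obtain ⟨h, h', hhh', hg, hg'⟩ := hB.1 g g' hgg'
    by_cases hh : h ∈ S
    · by_cases hh' : h' ∈ S
      · exact ⟨⟨h, hh⟩, ⟨h', hh'⟩, hhh'.imp Subtype.ext id, hg, hg'⟩
      · simp only [hS h' hh', Set.union_empty] at hg hg'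
        exact ⟨⟨h, hh⟩, ⟨h, hh⟩, Or.inl rfl, Or.inl hg, Or.inl hg'⟩
    · simp only [hS h hh, Set.empty_union] at hg hg'
      exact ⟨⟨h', mem_S hg⟩, ⟨h', mem_S hg⟩, Or.inl rfl, Or.inl hg, Or.inl hg'⟩
  · let f : H.induce {h | g ∈ B h} →g (H.induce S).induce {h : S | g ∈ B h} :=
      { toFun := fun h => ⟨⟨h, mem_S h.2⟩, h.2⟩
        map_rel' := id }
    refine (hB.2 g).map f ?_
    rintro ⟨⟨h, -⟩, hg⟩
    exact ⟨⟨h, hg⟩, rfl⟩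

lemma DeconWidthLE.induce (hB : DeconWidthLE H B w) (S : Set β) :
    DeconWidthLE (H.induce S) (fun h => B h) w := by
  rintro h h' (rfl | hhh')
  exacts [hB h h (Or.inl rfl), hB h h' (Or.inr hhh')]

lemma exists_fst_notMem [Finite α] {k : ℕ} {s : Set (Fin k × α)} (hs : s.ncard < k) :
    ∃ i, ∀ a, (i, a) ∉ s := by
  by_contra! hcov
  have hfst : Prod.fst '' s = Set.univ :=
    Set.eq_univ_of_forall fun i => let ⟨a, ha⟩ := hcov i; ⟨(i, a), ha, rfl⟩
  have : k ≤ s.ncard := by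
    simpa [hfst] using Set.ncard_image_le (f := Prod.fst) s.toFinite
  omega

lemma DeconWidthLE.exists_fst_notMem [Finite α] {B : β → Set (Fin (w + 1) × α)}
    (hBw : DeconWidthLE H B w) (r : β) : ∃ i, ∀ a, (i, a) ∉ B r :=
  _root_.exists_fst_notMem (by simpa using Nat.lt_succ_of_le (hBw r r (Or.inl rfl)))

end Deconstruction

instance {h k : ℕ} : Finite {l : List (Fin k) // l.length ≤ h} :=
  (List.finite_length_le (Fin k) h).to_subtype

namespace kAryTree

variable {h k : ℕ}

def root (h k : ℕ) : {l : List (Fin k) // l.length ≤ h} := ⟨[], Nat.zero_le h⟩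

lemma adj_iff {a b : {l : List (Fin k) // l.length ≤ h}} :
    (kAryTree h k).Adj a b ↔ a ≠ b ∧ ((∃ i, b.1 = i :: a.1) ∨ ∃ i, a.1 = i :: b.1) := by
  simp [kAryTree, fromRel_adj]

lemma exists_walk_root_length_eq (v : {l : List (Fin k) // l.length ≤ h}) :
    ∃ W : (kAryTree h k).Walk (root h k) v, W.length = v.1.length := by
  obtain ⟨l, hl⟩ := v
  induction l with
  | nil => exact ⟨.nil, rfl⟩
  | cons i l ih =>
    obtain ⟨W, hW⟩ := ih (le_trans (by simp) hl)
    have hadj : (kAryTree h k).Adj ⟨l, le_trans (by simp) hl⟩ ⟨i :: l, hl⟩ :=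
      adj_iff.2 ⟨by simp, Or.inl ⟨i, rfl⟩⟩
    exact ⟨W.concat hadj, by simp [hW]⟩

lemma connected : (kAryTree h k).Connected := by
  refine (connected_iff_exists_forall_reachable _).2 ⟨root h k, fun v => ?_⟩
  obtain ⟨W, -⟩ := exists_walk_root_length_eq v
  exact W.reachable

lemma heightLE : (kAryTree h k).HeightLE h := by
  refine ⟨root h k, fun v => ?_⟩
  obtain ⟨W, hW⟩ := exists_walk_root_length_eq v
  exact (dist_le W).trans (hW ▸ v.2)

lemma isAcyclic : (kAryTree h k).IsAcyclic := by
  refine isAcyclic_of_adj_le_eq (fun v => v.1.length) fun v u u' hu hu' hlu hlu' => ?_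
  have eq_tail : ∀ {u}, (kAryTree h k).Adj v u → u.1.length ≤ v.1.length →
      u.1 = v.1.tail := by
    intro u hvu hlen
    obtain ⟨-, ⟨i, hi⟩ | ⟨i, hi⟩⟩ := adj_iff.1 hvu
    · simp [hi] at hlen
    · simp [hi]
  exact Subtype.ext ((eq_tail hu hlu).trans (eq_tail hu' hlu').symm)

lemma isTree : (kAryTree h k).IsTree := ⟨connected, isAcyclic⟩

end kAryTree

/-- `k` disjoint copies of `T_{d,k}`, as the box product with an edgeless graph. -/
def kAryForest (d k : ℕ) : SimpleGraph (Fin k × {l : List (Fin k) // l.length ≤ d}) :=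
  (⊥ : SimpleGraph (Fin k)) □ kAryTree d k

namespace kAryForest

variable {d k : ℕ}

/-- Since `kAryTree` extends words at the front, the `i`-th tree of the forest goes to the branch
of words ending in `i`. -/
def toKAryTree (d k : ℕ) : kAryForest d k →g kAryTree (d + 1) k where
  toFun p := ⟨p.2.1 ++ [p.1], by simpa using p.2.2⟩
  map_rel' := by
    rintro ⟨i, a⟩ ⟨j, b⟩ hab
    simp only [kAryForest, boxProd_adj, bot_adj, false_and, false_or] at hab
    obtain ⟨hab, rfl⟩ := hab
    obtain ⟨hne, ⟨x, hx⟩ | ⟨x, hx⟩⟩ := kAryTree.adj_iff.1 hab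
    all_goals
      refine kAryTree.adj_iff.2 ⟨fun h => hne (Subtype.ext ?_), by simp [hx]⟩
      simpa using h

lemma toKAryTree_injective : Function.Injective (toKAryTree d k) := by
  rintro ⟨i, a, ha⟩ ⟨j, b, hb⟩ hab
  obtain ⟨rfl, hij⟩ := List.append_inj' (Subtype.ext_iff.1 hab) rfl
  simp_all

lemma isAcyclic : (kAryForest d k).IsAcyclic :=
  kAryTree.isAcyclic.comap _ toKAryTree_injective

lemma componentHeightLE : (kAryForest d k).ComponentHeightLE d :=
  componentHeightLE_bot_boxProd kAryTree.connected kAryTree.heightLE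

end kAryForest

section Hierarchy

variable {β : Type} {H : SimpleGraph β} {d w : ℕ}

lemma kAryForest_zero_not_hasDeconOfWidth (hH : H.IsTree) (hh : H.HeightLE 0) :
    ¬ HasDeconOfWidth (kAryForest 0 (w + 1)) H w := by
  rintro ⟨B, hB, hBw⟩
  obtain ⟨r, hr⟩ := hh
  obtain ⟨i, hi⟩ := hBw.exists_fst_notMem r
  obtain ⟨h, hmem⟩ := hB.exists_mem (i, kAryTree.root 0 (w + 1))
  obtain rfl : r = h := hH.connected.dist_eq_zero_iff.1 (Nat.le_zero.1 (hr h))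
  exact hi _ hmem

lemma kAryTree_not_hasDeconOfWidth_of_kAryForest
    (hF : ∀ (β : Type) (H : SimpleGraph β), H.IsTree → H.HeightLE d →
      ¬ HasDeconOfWidth (kAryForest d (w + 1)) H w)
    (hH : H.IsAcyclic) (hh : H.ComponentHeightLE d) :
    ¬ HasDeconOfWidth (kAryTree (d + 1) (w + 1)) H w := by
  rintro ⟨B, hB, hBw⟩
  obtain ⟨h₀, h₀mem⟩ := hB.exists_mem (kAryTree.root (d + 1) (w + 1))
  obtain ⟨c, hc₀, hc⟩ := hh h₀
  have hS : ∀ h ∉ {v | H.Reachable c v}, B h = ∅ := fun h hh =>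
    Set.eq_empty_of_forall_notMem fun g hg =>
      hh (hc₀.trans (hB.reachable kAryTree.connected.preconnected h₀mem hg))
  refine hF _ _ ⟨connected_induce_reachable c, hH.induce _⟩ (heightLE_induce_reachable hc) ?_
  exact HasDeconOfWidth.comap ⟨_, hB.induce hS, hBw.induce _⟩ (kAryForest.toKAryTree d (w + 1))
    kAryForest.toKAryTree_injective

lemma kAryForest_succ_not_hasDeconOfWidth_of_kAryTree
    (hT : ∀ (β : Type) (H : SimpleGraph β), H.IsAcyclic → H.ComponentHeightLE d →
      ¬ HasDeconOfWidth (kAryTree (d + 1) (w + 1)) H w)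
    (hH : H.IsTree) (hh : H.HeightLE (d + 1)) :
    ¬ HasDeconOfWidth (kAryForest (d + 1) (w + 1)) H w := by
  rintro ⟨B, hB, hBw⟩
  obtain ⟨r, hr⟩ := hh
  obtain ⟨i, hi⟩ := hBw.exists_fst_notMem r
  let f := boxProdRight (⊥ : SimpleGraph (Fin (w + 1))) (kAryTree (d + 1) (w + 1)) i
  have hr' : f ⁻¹' B r = ∅ := Set.eq_empty_of_forall_notMem fun a => hi a
  refine hT _ _ (hH.isAcyclic.anti (H.deleteIncidenceSet_le r))
    (hH.componentHeightLE_deleteIncidenceSet hr) ⟨fun h => f ⁻¹' B h, ?_, ?_⟩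
  · exact (hB.comap f.toHom).deleteIncidenceSet hr'
  · exact (hBw.comap f.injective).mono (H.deleteIncidenceSet_le r)

theorem kAryForest_not_hasDeconOfWidth (hH : H.IsTree) (hh : H.HeightLE d) :
    ¬ HasDeconOfWidth (kAryForest d (w + 1)) H w := by
  induction d generalizing β with
  | zero => exact kAryForest_zero_not_hasDeconOfWidth hH hh
  | succ d ih =>
    refine kAryForest_succ_not_hasDeconOfWidth_of_kAryTree (fun _ _ hA hh' => ?_) hH hh
    exact kAryTree_not_hasDeconOfWidth_of_kAryForest (fun _ _ => ih) hA hh'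

theorem kAryTree_not_hasDeconOfWidth (hH : H.IsAcyclic) (hh : H.ComponentHeightLE d) :
    ¬ HasDeconOfWidth (kAryTree (d + 1) (w + 1)) H w :=
  kAryTree_not_hasDeconOfWidth_of_kAryForest (fun _ _ => kAryForest_not_hasDeconOfWidth) hH hh

end Hierarchy

/-- for each `d ≥ 0`, (1) `ℱ_d ⋠ 𝒯_d` and (2) `𝒯_{d+1} ⋠ ℱ_d`. -/
theorem bounded_td_hierarchy (d : ℕ) :
    ¬ DeconLE (classFd d) (classTd d) ∧
    ¬ DeconLE (classTd (d + 1)) (classFd d) := by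
  constructor
  · rintro ⟨w, hw⟩
    obtain ⟨n, G, ⟨φ⟩⟩ := exists_iso_fin (kAryForest d (w + 1))
    obtain ⟨H, ⟨hT, hh⟩, hdec⟩ := hw ⟨n, G⟩
      ⟨φ.isAcyclic_iff.2 kAryForest.isAcyclic, kAryForest.componentHeightLE.of_iso φ.symm⟩
    exact kAryForest_not_hasDeconOfWidth hT hh
      (HasDeconOfWidth.comap hdec φ.symm.toHom φ.symm.injective)
  · rintro ⟨w, hw⟩
    obtain ⟨n, G, ⟨φ⟩⟩ := exists_iso_fin (kAryTree (d + 1) (w + 1))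
    obtain ⟨H, ⟨hA, hh⟩, hdec⟩ := hw ⟨n, G⟩
      ⟨φ.isTree_iff.2 kAryTree.isTree, kAryTree.heightLE.of_iso φ.symm⟩
    exact kAryTree_not_hasDeconOfWidth hA hh
      (HasDeconOfWidth.comap hdec φ.symm.toHom φ.symm.injective)
end

section
/- Let 𝒢 be a class of finite simple graphs with bounded tree depth, and let ℋ be the class of all forests that are minors of graphs in 𝒢. Then ℋ is a class of forests of bounded height, 𝒢 ≡ ℋ, and 𝒢 and ℋ have the same stack depth. -/
open SimpleGraph

/-!
An elimination forest of height `h` puts a top vertex (an ancestor of all the others) above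
every connected set. If a minor of `G` contains a path on `n + 1` vertices, the top of the union
of the branch sets lies in one of them, and the branch sets on either side form shorter path
models whose tops are strictly deeper; induction on the remaining depth gives
`n + 2 ≤ 2 ^ (h + 1)`, which bounds the height of every forest minor.

Conversely, a depth-first (normal) spanning forest `F` of `G` is a forest minor in which every
edge of `G` joins an ancestor to a descendant. Its root paths are paths of `G`, hence short, so
the ancestor sets of the vertices of `F` form an `F`-deconstruction of `G` of bounded width. A
minor map gives a deconstruction of width two in the other direction, and as the trees
`T_{d,k}` are forests, `𝒢` and its forest minors have the same `T_{d,k}` as minors.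
-/

open Function

def ReachableIn {α : Type} (G : SimpleGraph α) (s : Set α) (a b : α) : Prop :=
  ∃ w : G.Walk a b, ∀ x ∈ w.support, x ∈ s

namespace ReachableIn

variable {α : Type} {G : SimpleGraph α} {s t : Set α} {a b c : α}

lemma refl (ha : a ∈ s) : ReachableIn G s a a := ⟨.nil, by simpa using ha⟩

lemma mem_right (h : ReachableIn G s a b) : b ∈ s :=
  h.elim fun w hw => hw b w.end_mem_support

lemma symm (h : ReachableIn G s a b) : ReachableIn G s b a :=
  h.elim fun w hw => ⟨w.reverse, by simpa using hw⟩

lemma trans (h : ReachableIn G s a b) (h' : ReachableIn G s b c) : ReachableIn G s a c := by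
  obtain ⟨w, hw⟩ := h
  obtain ⟨w', hw'⟩ := h'
  refine ⟨w.append w', fun x hx => ?_⟩
  rcases (Walk.mem_support_append_iff _ _).1 hx with hx | hx
  exacts [hw x hx, hw' x hx]

lemma mono (hst : s ⊆ t) (h : ReachableIn G s a b) : ReachableIn G t a b :=
  h.elim fun w hw => ⟨w, fun x hx => hst (hw x hx)⟩

lemma of_adj (ha : a ∈ s) (hb : b ∈ s) (hab : G.Adj a b) : ReachableIn G s a b :=
  ⟨hab.toWalk, by simp [ha, hb]⟩

lemma of_closed (h : ReachableIn G s a b) (ha : a ∈ t)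
    (ht : ∀ x ∈ t, ∀ y ∈ s, G.Adj x y → y ∈ t) : ReachableIn G t a b := by
  obtain ⟨w, hw⟩ := h
  induction w with
  | nil => exact refl ha
  | cons hxy w ih =>
    have hy := ht _ ha _ (hw _ (by simp)) hxy
    exact (of_adj ha hy hxy).trans (ih hy fun x hx => hw x (by simp [hx]))

lemma of_induce {x y : s} (w : (G.induce s).Walk x y) : ReachableIn G s x y := by
  induction w with
  | nil => exact refl (Subtype.prop _)
  | cons hxy _ ih => exact (of_adj (Subtype.prop _) (Subtype.prop _) hxy).trans ih

lemma exists_adj_sdiff {a v : α} (h : ReachableIn G t v a) (hva : v ≠ a) :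
    ∃ x, G.Adj a x ∧ ReachableIn G (t \ {a}) x v := by
  obtain ⟨w, hw⟩ := h
  induction w with
  | nil => exact absurd rfl hva
  | @cons v z a hvz w ih =>
    have hv : v ∈ t \ {a} := ⟨hw v (by simp), hva⟩
    by_cases hza : z = a
    · subst hza
      exact ⟨v, hvz.symm, refl hv⟩
    · obtain ⟨x, hax, hxz⟩ := ih hza fun u hu => hw u (by simp [hu])
      exact ⟨x, hax, hxz.trans (of_adj hxz.mem_right hv hvz.symm)⟩

end ReachableIn

lemma connSet_iff {α : Type} {G : SimpleGraph α} {s : Set α} :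
    ConnSet G s ↔ s.Nonempty ∧ ∀ a ∈ s, ∀ b ∈ s, ReachableIn G s a b := by
  refine ⟨fun h => ⟨?_, fun a ha b hb => ?_⟩, fun ⟨⟨x, hx⟩, h⟩ => ?_⟩
  · obtain ⟨⟨x, hx⟩⟩ := h.nonempty
    exact ⟨x, hx⟩
  · obtain ⟨w⟩ := h.preconnected ⟨a, ha⟩ ⟨b, hb⟩
    exact ReachableIn.of_induce w
  · have : Nonempty s := ⟨⟨x, hx⟩⟩
    refine Connected.mk fun ⟨a, ha⟩ ⟨b, hb⟩ => ?_
    obtain ⟨w, hw⟩ := h a ha b hb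
    exact ⟨w.induce s hw⟩

lemma connSet_singleton {α : Type} (G : SimpleGraph α) (a : α) : ConnSet G {a} :=
  connSet_iff.2 ⟨⟨a, rfl⟩, by rintro x rfl y rfl; exact ReachableIn.refl rfl⟩

section Ancestors

variable {α : Type} (par : α → α)

def IterAncestor (a x : α) : Prop := ∃ k, par^[k] x = a

/-- Steps from `x` to the first fixed point of its orbit (`0`, as `sInf ∅ = 0`, if there is
none). -/
noncomputable def rootDist (x : α) : ℕ := sInf {k | par (par^[k] x) = par^[k] x}

variable {par}

lemma IterAncestor.refl (x : α) : IterAncestor par x x := ⟨0, rfl⟩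

lemma IterAncestor.trans {a b x : α} (hab : IterAncestor par a b) (hbx : IterAncestor par b x) :
    IterAncestor par a x := by
  obtain ⟨i, rfl⟩ := hab
  obtain ⟨j, rfl⟩ := hbx
  exact ⟨i + j, iterate_add_apply par i j x⟩

lemma IterAncestor.total {a b x : α} (ha : IterAncestor par a x) (hb : IterAncestor par b x) :
    IterAncestor par a b ∨ IterAncestor par b a := by
  obtain ⟨i, rfl⟩ := ha
  obtain ⟨j, rfl⟩ := hb
  rcases le_total i j with hij | hij
  · exact .inr ⟨j - i, by rw [← iterate_add_apply, Nat.sub_add_cancel hij]⟩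
  · exact .inl ⟨i - j, by rw [← iterate_add_apply, Nat.sub_add_cancel hij]⟩

lemma IterAncestor.of_agree {f g : α → α} (hfg : ∀ z, g z ≠ z → f z = g z) {a x : α}
    (h : IterAncestor g a x) : IterAncestor f a x := by
  obtain ⟨k, rfl⟩ := h
  induction k generalizing x with
  | zero => exact IterAncestor.refl x
  | succ k ih =>
    by_cases hx : g x = x
    · rw [iterate_succ_apply, hx]
      exact ih (x := x)
    · exact (ih (x := g x)).trans ⟨1, by simp [hfg x hx]⟩

lemma exists_root_iterAncestor {d : α → ℕ} (hd : ∀ v, par v ≠ v → d (par v) < d v)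
    {S : Set α} (hS : ∀ v ∈ S, par v ∈ S) {v : α} (hv : v ∈ S) :
    ∃ ρ ∈ S, par ρ = ρ ∧ IterAncestor par ρ v := by
  induction v using (measure d).wf.induction with
  | h v ih =>
    by_cases hv' : par v = v
    · exact ⟨v, hv, hv', .refl v⟩
    · obtain ⟨ρ, hρ, hρ', hanc⟩ := ih (par v) (hd v hv') (hS v hv)
      exact ⟨ρ, hρ, hρ', hanc.trans ⟨1, rfl⟩⟩

variable {h : ℕ} (hfix : ∀ v, par (par^[h] v) = par^[h] v)
include hfix

lemma rootDist_le (x : α) : rootDist par x ≤ h := Nat.sInf_le (hfix x)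

lemma iterate_fixed_of_rootDist_le {x : α} {k : ℕ} (hk : rootDist par x ≤ k) :
    par (par^[k] x) = par^[k] x := by
  have hx : par (par^[rootDist par x] x) = par^[rootDist par x] x :=
    Nat.sInf_mem (s := {k | par (par^[k] x) = par^[k] x}) ⟨h, hfix x⟩
  rw [← Nat.sub_add_cancel hk, iterate_add_apply, iterate_fixed hx]
  exact hx

lemma rootDist_iterate_le (x : α) (k : ℕ) : rootDist par (par^[k] x) ≤ rootDist par x - k := by
  refine Nat.sInf_le ?_
  show par (par^[rootDist par x - k] (par^[k] x)) = par^[rootDist par x - k] (par^[k] x)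
  rw [← iterate_add_apply]
  exact iterate_fixed_of_rootDist_le hfix (by omega)

lemma rootDist_lt_of_iterAncestor {a x : α} (hax : IterAncestor par a x) (hne : a ≠ x) :
    rootDist par a < rootDist par x := by
  obtain ⟨k, rfl⟩ := hax
  have hk : k ≠ 0 := by rintro rfl; exact hne rfl
  have hx : rootDist par x ≠ 0 := fun h0 => hne (iterate_fixed (by
    simpa [h0] using iterate_fixed_of_rootDist_le (x := x) hfix (k := 0) (by omega)) k)
  have := rootDist_iterate_le hfix x k
  omega

end Ancestors

/-- `f 0, …, f n` are the branch sets of a model of the path on `n + 1` vertices. -/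
def IsPathModel {α : Type} (G : SimpleGraph α) (f : ℕ → Set α) (n : ℕ) : Prop :=
  (∀ i ≤ n, ConnSet G (f i)) ∧ (∀ i ≤ n, ∀ j ≤ n, i ≠ j → Disjoint (f i) (f j)) ∧
    ∀ i < n, ∃ a ∈ f i, ∃ b ∈ f (i + 1), G.Adj a b

namespace IsPathModel

variable {α : Type} {G : SimpleGraph α} {f : ℕ → Set α} {n : ℕ}

lemma take (hf : IsPathModel G f n) {m : ℕ} (hm : m ≤ n) : IsPathModel G f m :=
  ⟨fun i hi => hf.1 i (by omega), fun i hi j hj => hf.2.1 i (by omega) j (by omega),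
    fun i hi => hf.2.2 i (by omega)⟩

lemma shift (hf : IsPathModel G f n) {j m : ℕ} (hjm : j + m ≤ n) :
    IsPathModel G (fun i => f (j + i)) m :=
  ⟨fun i hi => hf.1 _ (by omega),
    fun i hi k hk hik => hf.2.1 _ (by omega) _ (by omega) (by omega),
    fun i hi => hf.2.2 _ (by omega)⟩

lemma connSet_biUnion (hf : IsPathModel G f n) : ConnSet G (⋃ i ≤ n, f i) := by
  have hsub : ∀ i ≤ n, f i ⊆ ⋃ i ≤ n, f i := fun i hi => Set.subset_biUnion_of_mem (u := f) hi
  obtain ⟨b, hb⟩ := (connSet_iff.1 (hf.1 0 (Nat.zero_le n))).1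
  have hreach : ∀ i ≤ n, ∀ a ∈ f i, ReachableIn G (⋃ i ≤ n, f i) a b := by
    intro i
    induction i with
    | zero => exact fun h0 a ha => ((connSet_iff.1 (hf.1 0 h0)).2 a ha b hb).mono (hsub 0 h0)
    | succ i ih =>
      intro hi a ha
      obtain ⟨x, hx, y, hy, hxy⟩ := hf.2.2 i hi
      have hay := ((connSet_iff.1 (hf.1 (i + 1) hi)).2 a ha y hy).mono (hsub _ hi)
      exact hay.trans ((ReachableIn.of_adj (hsub _ hi hy) (hsub i (by omega) hx) hxy.symm).trans
        (ih (by omega) x hx))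
  refine connSet_iff.2 ⟨⟨b, hsub 0 (Nat.zero_le n) hb⟩, fun a ha c hc => ?_⟩
  simp only [Set.mem_iUnion] at ha hc
  obtain ⟨i, hi, ha⟩ := ha
  obtain ⟨j, hj, hc⟩ := hc
  exact (hreach i hi a ha).trans (hreach j hj c hc).symm

end IsPathModel

section EliminationForest

variable {α : Type} {G : SimpleGraph α} {par : α → α} {h : ℕ}
  (hfix : ∀ v, par (par^[h] v) = par^[h] v)
  (hcmp : ∀ u v, G.Adj u v → (∃ k, par^[k] u = v) ∨ (∃ k, par^[k] v = u))
include hfix hcmp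

/-- A vertex of minimal `rootDist` is the top: along an edge, ancestry of `c` could only be
lost to a vertex strictly above `c`. -/
lemma exists_top_of_connSet {C : Set α} (hC : ConnSet G C) :
    ∃ c ∈ C, ∀ y ∈ C, IterAncestor par c y := by
  obtain ⟨hne, hreach⟩ := connSet_iff.1 hC
  obtain ⟨c, hc, hmin⟩ := (measure (rootDist par)).wf.has_min C hne
  refine ⟨c, hc, fun y hy => ?_⟩
  obtain ⟨w, hw⟩ := hreach c hc y hy
  suffices ∀ {x : α} (w : G.Walk x y), (∀ z ∈ w.support, z ∈ C) →
      IterAncestor par c x → IterAncestor par c y from this w hw (IterAncestor.refl c)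
  clear hw w hy
  intro x w hw hcx
  induction w with
  | nil => exact hcx
  | @cons x z _ hxz w ih =>
    refine ih (fun u hu => hw u (by simp [hu])) ?_
    rcases hcmp x z hxz with hzx | hxz
    · rcases hcx.total hzx with hcz | hzc
      · exact hcz
      · by_cases hzc' : z = c
        · exact hzc' ▸ IterAncestor.refl z
        · exact absurd (rootDist_lt_of_iterAncestor hfix hzc hzc') (hmin z (hw z (by simp)))
    · exact hcx.trans hxz

/-- The top `c` lies in some `f j`; the branch sets on either side of `f j` have tops strictly
below `c`, so the budget `m` drops by one on each side. -/
lemma IsPathModel.add_two_le_of_top (m : ℕ) : ∀ {f : ℕ → Set α} {n : ℕ}, IsPathModel G f n →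
    ∀ c ∈ ⋃ i ≤ n, f i, (∀ y ∈ ⋃ i ≤ n, f i, IterAncestor par c y) →
    h < rootDist par c + m → n + 2 ≤ 2 ^ m := by
  induction m with
  | zero => exact fun _ c _ _ hc => absurd (rootDist_le hfix c) (by omega)
  | succ m ih =>
    intro f n hf c hc htop hm
    have hside : ∀ {g : ℕ → Set α} {k : ℕ}, IsPathModel G g k →
        (⋃ i ≤ k, g i) ⊆ (⋃ i ≤ n, f i) → c ∉ (⋃ i ≤ k, g i) → k + 2 ≤ 2 ^ m := by
      intro g k hg hsub hcg
      obtain ⟨c', hc', htop'⟩ := exists_top_of_connSet hfix hcmp hg.connSet_biUnion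
      have hlt := rootDist_lt_of_iterAncestor hfix (htop c' (hsub hc'))
        (fun hcc => hcg (hcc ▸ hc'))
      exact ih hg c' hc' htop' (by omega)
    simp only [Set.mem_iUnion] at hc
    obtain ⟨j, hj, hcj⟩ := hc
    have hnot : ∀ i ≤ n, i ≠ j → c ∉ f i := fun i hi hij hci =>
      Set.disjoint_left.1 (hf.2.1 i hi j hj hij) hci hcj
    have hleft : j + 1 ≤ 2 ^ m := by
      rcases Nat.eq_zero_or_pos j with rfl | hj0
      · exact Nat.one_le_two_pow
      · have := hside (hf.take (m := j - 1) (by omega))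
          (Set.iUnion₂_mono' fun i hi => ⟨i, by omega, le_rfl⟩)
          (by
            simp only [Set.mem_iUnion, not_exists]
            exact fun i hi => hnot i (by omega) (by omega))
        omega
    have hright : n - j + 1 ≤ 2 ^ m := by
      rcases Nat.eq_or_lt_of_le hj with rfl | hjn
      · simpa using Nat.one_le_two_pow
      · have := hside (hf.shift (j := j + 1) (m := n - j - 1) (by omega))
          (Set.iUnion₂_mono' fun i hi => ⟨j + 1 + i, by omega, le_rfl⟩)
          (by
            simp only [Set.mem_iUnion, not_exists]
            exact fun i hi => hnot _ (by omega) (by omega))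
        omega
    rw [pow_succ]
    omega

theorem IsPathModel.add_two_le {f : ℕ → Set α} {n : ℕ} (hf : IsPathModel G f n) :
    n + 2 ≤ 2 ^ (h + 1) := by
  obtain ⟨c, hc, htop⟩ := exists_top_of_connSet hfix hcmp hf.connSet_biUnion
  exact hf.add_two_le_of_top hfix hcmp (h + 1) c hc htop (by omega)

end EliminationForest

namespace IsMinorMap

variable {α β γ : Type} {M : SimpleGraph α} {G : SimpleGraph β} {μ : α → Set β}

lemma of_injective (φ : M →g G) (hφ : Injective φ) : IsMinorMap M G (fun m => {φ m}) :=
  ⟨fun m => connSet_singleton G (φ m),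
    fun _ _ hne => Set.disjoint_singleton.2 (hφ.ne hne),
    fun _ _ hadj => ⟨φ _, rfl, φ _, rfl, φ.map_adj hadj⟩⟩

lemma reachableIn_biUnion (hμ : IsMinorMap M G μ) {S : Set α} {x y : α}
    (hxy : ReachableIn M S x y) {a b : β} (ha : a ∈ μ x) (hb : b ∈ μ y) :
    ReachableIn G (⋃ z ∈ S, μ z) a b := by
  obtain ⟨w, hw⟩ := hxy
  have hsub : ∀ z ∈ S, μ z ⊆ ⋃ z ∈ S, μ z := fun z hz => Set.subset_biUnion_of_mem hz
  induction w generalizing a with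
  | nil => exact ((connSet_iff.1 (hμ.1 _)).2 a ha b hb).mono (hsub _ (hw _ (by simp)))
  | @cons x z _ hxz w ih =>
    obtain ⟨a', ha', b', hb', hab'⟩ := hμ.2.2 x z hxz
    have hx := hw x (by simp)
    have hz := hw z (by simp)
    exact (((connSet_iff.1 (hμ.1 x)).2 a ha a' ha').mono (hsub x hx)).trans
      ((ReachableIn.of_adj (hsub x hx ha') (hsub z hz hb') hab').trans
        (ih hb' hb fun u hu => hw u (by simp [hu])))

lemma connSet_biUnion (hμ : IsMinorMap M G μ) {S : Set α} (hS : ConnSet M S) :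
    ConnSet G (⋃ z ∈ S, μ z) := by
  obtain ⟨⟨x, hx⟩, hreach⟩ := connSet_iff.1 hS
  obtain ⟨⟨a, ha⟩, -⟩ := connSet_iff.1 (hμ.1 x)
  refine connSet_iff.2 ⟨⟨a, Set.mem_biUnion hx ha⟩, fun b hb c hc => ?_⟩
  simp only [Set.mem_iUnion] at hb hc
  obtain ⟨y, hy, hb⟩ := hb
  obtain ⟨z, hz, hc⟩ := hc
  exact hμ.reachableIn_biUnion (hreach y hy z hz) hb hc

lemma comp {H : SimpleGraph γ} {ν : β → Set γ} (hμ : IsMinorMap M G μ)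
    (hν : IsMinorMap G H ν) : IsMinorMap M H (fun m => ⋃ x ∈ μ m, ν x) := by
  refine ⟨fun m => hν.connSet_biUnion (hμ.1 m), fun m m' hne => ?_, fun m m' hadj => ?_⟩
  · refine Set.disjoint_left.2 fun g hg hg' => ?_
    simp only [Set.mem_iUnion] at hg hg'
    obtain ⟨x, hx, hgx⟩ := hg
    obtain ⟨y, hy, hgy⟩ := hg'
    rcases eq_or_ne x y with rfl | hxy
    · exact Set.disjoint_left.1 (hμ.2.1 m m' hne) hx hy
    · exact Set.disjoint_left.1 (hν.2.1 x y hxy) hgx hgy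
  · obtain ⟨x, hx, y, hy, hxy⟩ := hμ.2.2 m m' hadj
    obtain ⟨a, ha, b, hb, hab⟩ := hν.2.2 x y hxy
    exact ⟨a, Set.mem_biUnion hx ha, b, Set.mem_biUnion hy hb, hab⟩

lemma isPathModel_getVert (hμ : IsMinorMap M G μ) {a b : α} {p : M.Walk a b} (hp : p.IsPath) :
    IsPathModel G (fun i => μ (p.getVert i)) p.length :=
  ⟨fun _ _ => hμ.1 _,
    fun _ hi _ hj hij => hμ.2.1 _ _ fun he => hij (hp.getVert_injOn hi hj he),
    fun _ hi => hμ.2.2 _ _ (p.adj_getVert_succ hi)⟩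

/-- Width two because each vertex of the host graph lies in at most one branch set. -/
lemma isDeconstruction_preimage (hμ : IsMinorMap M G μ) :
    IsDeconstruction M G (fun g => {m | g ∈ μ m}) ∧ DeconWidthLE G (fun g => {m | g ∈ μ m}) 2 := by
  obtain ⟨hconn, hdisj, hedge⟩ := hμ
  refine ⟨⟨?_, fun m => hconn m⟩, fun g g' _ => ?_⟩
  · rintro m m' (rfl | hadj)
    · obtain ⟨⟨g, hg⟩, -⟩ := connSet_iff.1 (hconn m)
      exact ⟨g, g, .inl rfl, .inl hg, .inl hg⟩
    · obtain ⟨g, hg, g', hg', hadj'⟩ := hedge m m' hadj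
      exact ⟨g, g', .inr hadj', .inl hg, .inr hg'⟩
  · have hle : ∀ x : β, ({m | x ∈ μ m} : Set α).ncard ≤ 1 := fun x => by
      by_cases hfin : ({m | x ∈ μ m} : Set α).Finite
      · exact (Set.ncard_le_one hfin).2 fun m hm m' hm' => by
          by_contra hne
          exact Set.disjoint_left.1 (hdisj m m' hne) hm hm'
      · simp [Set.Infinite.ncard hfin]
    calc ({m | g ∈ μ m} ∪ {m | g' ∈ μ m}).ncard
        ≤ ({m | g ∈ μ m} : Set α).ncard + ({m | g' ∈ μ m} : Set α).ncard := Set.ncard_union_le _ _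
      _ ≤ 2 := by have := hle g; have := hle g'; omega

end IsMinorMap

section ParentGraph

variable {V : Type} (q : V → V)

def parentGraph : SimpleGraph V := SimpleGraph.fromRel fun x y => q x = y

variable {q}

lemma parentGraph_adj {u v : V} : (parentGraph q).Adj u v ↔ u ≠ v ∧ (q u = v ∨ q v = u) :=
  fromRel_adj _ u v

lemma parentGraph_le {G : SimpleGraph V} (hadj : ∀ v, q v ≠ v → G.Adj v (q v)) :
    parentGraph q ≤ G := by
  intro u v huv
  rcases (parentGraph_adj.1 huv).2 with rfl | rfl
  · exact hadj u huv.1.symm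
  · exact (hadj v huv.1).symm

/-- On a cycle, a vertex of maximal depth would have two distinct neighbours on the cycle,
each of which must be its parent. -/
theorem parentGraph_isAcyclic (d : V → ℕ) (hd : ∀ v, q v ≠ v → d (q v) < d v) :
    (parentGraph q).IsAcyclic := by
  classical
  intro v c hc
  obtain ⟨m, hm, hmax⟩ := c.support.toFinset.exists_max_image d ⟨v, by simp⟩
  rw [List.mem_toFinset] at hm
  have hc' := hc.rotate hm
  have hparent : ∀ x ∈ (c.rotate m hm).support, (parentGraph q).Adj m x → x = q m := by
    intro x hx hmx
    rcases (parentGraph_adj.1 hmx).2 with hqm | hqx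
    · exact hqm.symm
    · have := hmax x (by simpa [Walk.mem_support_rotate_iff] using hx)
      have := hd x (hqx ▸ hmx.1)
      rw [hqx] at this
      omega
  have hnil := hc'.not_nil
  exact hc'.snd_ne_penultimate ((hparent _ (Walk.getVert_mem_support _ _) (Walk.adj_snd hnil)).trans
    (hparent _ (Walk.getVert_mem_support _ _) (Walk.adj_penultimate hnil).symm).symm)

lemma reachableIn_descendants {g v : V} (hv : IterAncestor q g v) :
    ReachableIn (parentGraph q) {w | IterAncestor q g w} v g := by
  obtain ⟨k, hk⟩ := hv
  induction k generalizing v with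
  | zero =>
    subst hk
    exact .refl (IterAncestor.refl v)
  | succ k ih =>
    have hk' : q^[k] (q v) = g := by rwa [iterate_succ_apply] at hk
    by_cases hqv : q v = v
    · rw [hqv] at hk'
      exact ih hk'
    · have hv : IterAncestor q g v := ⟨k + 1, hk⟩
      have hqv' : IterAncestor q g (q v) := ⟨k, hk'⟩
      have hadj : (parentGraph q).Adj v (q v) := parentGraph_adj.2 ⟨Ne.symm hqv, .inl rfl⟩
      exact (ReachableIn.of_adj (s := {w | IterAncestor q g w}) hv hqv' hadj).trans (ih hk')

lemma connSet_descendants (g : V) : ConnSet (parentGraph q) {v | IterAncestor q g v} :=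
  connSet_iff.2 ⟨⟨g, .refl g⟩, fun _ ha _ hb =>
    (reachableIn_descendants ha).trans (reachableIn_descendants hb).symm⟩

lemma ncard_ancestors_le {D : ℕ} (hD : ∀ v, q (q^[D] v) = q^[D] v) (v : V) :
    {x | IterAncestor q x v}.ncard ≤ D + 1 := by
  classical
  have hsub : {x | IterAncestor q x v} ⊆ ↑((Finset.range (D + 1)).image fun k => q^[k] v) := by
    rintro x ⟨k, rfl⟩
    rw [Finset.coe_image]
    rcases le_or_gt k D with hk | hk
    · exact ⟨k, Finset.mem_range.2 (by omega), rfl⟩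
    · refine ⟨D, Finset.mem_range.2 (by omega), ?_⟩
      rw [← Nat.sub_add_cancel hk.le, iterate_add_apply, iterate_fixed (hD v)]
  calc {x | IterAncestor q x v}.ncard
      ≤ ((Finset.range (D + 1)).image fun k => q^[k] v).card :=
        (Set.ncard_le_ncard hsub (Finset.finite_toSet _)).trans (Set.ncard_coe_finset _).le
    _ ≤ D + 1 := Finset.card_image_le.trans (Finset.card_range _).le

end ParentGraph

section NormalForest

variable {V : Type} (G : SimpleGraph V)

/-- A normal (depth-first) spanning forest of `G[t]`: the fixed points of the parent function
`q` are its roots, which lie in `A`, and `d` witnesses that every chain reaches a root. -/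
structure IsNormalForest (t A : Set V) (q : V → V) (d : V → ℕ) : Prop where
  eq_self_of_notMem : ∀ v ∉ t, q v = v
  parent_mem : ∀ v ∈ t, q v ≠ v → q v ∈ t
  adj_parent : ∀ v ∈ t, q v ≠ v → G.Adj v (q v)
  root_mem : ∀ v ∈ t, q v = v → v ∈ A
  depth_lt : ∀ v, q v ≠ v → d (q v) < d v
  comparable : ∀ u ∈ t, ∀ v ∈ t, G.Adj u v → IterAncestor q v u ∨ IterAncestor q u v

variable {G}

lemma IsNormalForest.mem_of_ne {t A : Set V} {q : V → V} {d : V → ℕ}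
    (hq : IsNormalForest G t A q d) {v : V} (hv : q v ≠ v) : v ∈ t := by
  by_contra hv'
  exact hv (hq.eq_self_of_notMem v hv')

variable (G) in
open Classical in
/-- Hangs a forest on `t \ {a}` below `a`: its roots in the component of `a` in `G[t]` become
children of `a`. -/
noncomputable def hangBelow (t : Set V) (a : V) (q : V → V) : V → V :=
  fun v => if ReachableIn G t a v ∧ q v = v then a else q v

section HangBelow

variable {t A A' : Set V} {a : V} {q : V → V} {d : V → ℕ}

lemma hangBelow_of_root {v : V} (hv : ReachableIn G t a v ∧ q v = v) : hangBelow G t a q v = a :=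
  if_pos hv

lemma hangBelow_of_not_root {v : V} (hv : ¬ (ReachableIn G t a v ∧ q v = v)) :
    hangBelow G t a q v = q v :=
  if_neg hv

lemma hangBelow_of_ne {v : V} (hv : q v ≠ v) : hangBelow G t a q v = q v :=
  hangBelow_of_not_root fun h => hv h.2

lemma IsNormalForest.iterAncestor_hangBelow (ha : a ∈ t)
    (hq : IsNormalForest G (t \ {a}) A' q d) {v : V} (hav : G.Adj a v) (hv : v ∈ t) :
    IterAncestor (hangBelow G t a q) a v := by
  have hclosed : ∀ z ∈ {z | ReachableIn G t a z}, q z ∈ {z | ReachableIn G t a z} := by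
    intro z hz
    by_cases hqz : q z = z
    · rwa [hqz]
    · have hz' := hq.mem_of_ne hqz
      exact hz.trans (.of_adj hz'.1 (hq.parent_mem z hz' hqz).1 (hq.adj_parent z hz' hqz))
  obtain ⟨ρ, hρ, hqρ, hanc⟩ := exists_root_iterAncestor hq.depth_lt hclosed
    (ReachableIn.of_adj ha hv hav)
  exact IterAncestor.trans ⟨1, hangBelow_of_root ⟨hρ, hqρ⟩⟩ (hanc.of_agree fun _ => hangBelow_of_ne)

open Classical in
lemma IsNormalForest.isNormalForest_hangBelow (ha : a ∈ t) (haA : a ∈ A)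
    (hA' : ∀ x ∈ A', (ReachableIn G t a x → G.Adj a x) ∧ (¬ ReachableIn G t a x → x ∈ A))
    (hq : IsNormalForest G (t \ {a}) A' q d) :
    IsNormalForest G t A (hangBelow G t a q) (fun v => if v = a then 0 else d v + 1) := by
  have hagree : ∀ z, q z ≠ z → hangBelow G t a q z = q z := fun _ => hangBelow_of_ne
  refine ⟨fun v hv => ?_, fun v hv hpar => ?_, fun v hv hpar => ?_, fun v hv hpar => ?_,
    fun v hpar => ?_, fun u hu v hv huv => ?_⟩
  · rw [hangBelow_of_not_root fun h => hv h.1.mem_right]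
    exact hq.eq_self_of_notMem v fun h => hv h.1
  · by_cases hc : ReachableIn G t a v ∧ q v = v
    · rwa [hangBelow_of_root hc]
    · rw [hangBelow_of_not_root hc] at hpar ⊢
      exact (hq.parent_mem v (hq.mem_of_ne hpar) hpar).1
  · by_cases hc : ReachableIn G t a v ∧ q v = v
    · rw [hangBelow_of_root hc] at hpar ⊢
      exact ((hA' v (hq.root_mem v ⟨hv, hpar.symm⟩ hc.2)).1 hc.1).symm
    · rw [hangBelow_of_not_root hc] at hpar ⊢
      exact hq.adj_parent v (hq.mem_of_ne hpar) hpar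
  · by_cases hc : ReachableIn G t a v ∧ q v = v
    · rw [hangBelow_of_root hc] at hpar
      exact hpar ▸ haA
    · rw [hangBelow_of_not_root hc] at hpar
      rcases eq_or_ne v a with rfl | hva
      · exact haA
      · exact (hA' v (hq.root_mem v ⟨hv, hva⟩ hpar)).2 fun h => hc ⟨h, hpar⟩
  · by_cases hc : ReachableIn G t a v ∧ q v = v
    · rw [hangBelow_of_root hc] at hpar ⊢
      simp [hpar.symm]
    · rw [hangBelow_of_not_root hc] at hpar ⊢
      have hv := hq.mem_of_ne hpar
      have hqv := hq.parent_mem v hv hpar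
      show (if q v = a then 0 else d (q v) + 1) < (if v = a then 0 else d v + 1)
      rw [if_neg (Set.notMem_singleton_iff.1 hqv.2), if_neg (Set.notMem_singleton_iff.1 hv.2)]
      exact Nat.succ_lt_succ (hq.depth_lt v hpar)
  · rcases eq_or_ne u a with rfl | hua
    · exact .inr (hq.iterAncestor_hangBelow ha huv hv)
    rcases eq_or_ne v a with rfl | hva
    · exact .inl (hq.iterAncestor_hangBelow ha huv.symm hu)
    exact (hq.comparable u ⟨hu, hua⟩ v ⟨hv, hva⟩ huv).imp (·.of_agree hagree) (·.of_agree hagree)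

end HangBelow

theorem exists_isNormalForest (t : Finset V) :
    ∀ A : Set V, (∀ v ∈ t, ∃ x ∈ A, ReachableIn G t v x) → ∃ q d, IsNormalForest G t A q d := by
  classical
  induction t using Finset.strongInduction with
  | H t ih =>
  intro A hA
  rcases t.eq_empty_or_nonempty with rfl | ⟨v₀, hv₀⟩
  · exact ⟨id, 0, ⟨fun _ _ => rfl, by simp, by simp, by simp, fun _ h => absurd rfl h, by simp⟩⟩
  obtain ⟨a, haA, hv₀a⟩ := hA v₀ hv₀
  have ha : a ∈ t := hv₀a.mem_right
  set A' := {x | (ReachableIn G t a x → G.Adj a x) ∧ (¬ ReachableIn G t a x → x ∈ A)}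
  have hA' : ∀ v ∈ t.erase a, ∃ x ∈ A', ReachableIn G ↑(t.erase a) v x := by
    intro v hv
    rw [Finset.coe_erase]
    rw [Finset.mem_erase] at hv
    by_cases hav : ReachableIn G t a v
    · obtain ⟨x, hax, hxv⟩ := hav.symm.exists_adj_sdiff hv.1
      have hx : x ∈ (t : Set V) := (hxv.mono Set.sdiff_subset).symm.mem_right
      exact ⟨x, ⟨fun _ => hax, fun h => absurd (.of_adj ha hx hax) h⟩, hxv.symm⟩
    · obtain ⟨x, hxA, hvx⟩ := hA v hv.2
      have hvx' : ReachableIn G {z | z ∈ (t : Set V) ∧ ¬ ReachableIn G t a z} v x :=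
        hvx.of_closed ⟨hv.2, hav⟩ fun z hz y hy hzy =>
          ⟨hy, fun hay => hz.2 (hay.trans (.of_adj hy hz.1 hzy.symm))⟩
      refine ⟨x, ⟨fun h => absurd h hvx'.mem_right.2, fun _ => hxA⟩, hvx'.mono ?_⟩
      exact fun z hz => ⟨hz.1, by rintro rfl; exact hz.2 (.refl ha)⟩
  obtain ⟨q, d, hq⟩ := ih _ (Finset.erase_ssubset ha) A' hA'
  rw [Finset.coe_erase] at hq
  exact ⟨_, _, hq.isNormalForest_hangBelow ha haA fun x hx => hx⟩

end NormalForest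

namespace IsNormalForest

variable {V : Type} {G : SimpleGraph V} {A : Set V} {q : V → V} {d : V → ℕ}

/-- Below the first root the depth strictly decreases, so a root-free chain of length
`2 ^ (h + 1)` would be a path model in `G` that is too long for tree depth `h`. -/
lemma iterate_fixed_of_treeDepthLE (hq : IsNormalForest G Set.univ A q d) {h : ℕ}
    (htd : TreeDepthLE G h) (v : V) : q (q^[2 ^ (h + 1)] v) = q^[2 ^ (h + 1)] v := by
  obtain ⟨par, hfix, hcmp⟩ := htd
  set D := 2 ^ (h + 1)
  by_contra hD
  have hmoves : ∀ i ≤ D, q (q^[i] v) ≠ q^[i] v := fun i hi hfixed => hD (by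
    rw [← Nat.sub_add_cancel hi, iterate_add_apply, iterate_fixed hfixed, hfixed])
  have hinj : Set.InjOn (fun i => q^[i] v) (Set.Iic D) := by
    refine fun i hi j hj hij => (strictAntiOn_Iic_of_succ_lt (ψ := fun i => d (q^[i] v))
      fun m hm => ?_).injOn hi hj (congrArg d hij)
    show d (q^[Order.succ m] v) < d (q^[m] v)
    rw [Order.succ_eq_add_one, show q^[m + 1] v = q (q^[m] v) from iterate_succ_apply' q m v]
    exact hq.depth_lt _ (hmoves m hm.le)
  have hmodel : IsPathModel G (fun i => {q^[i] v}) D :=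
    ⟨fun i _ => connSet_singleton G _,
      fun i hi j hj hij => Set.disjoint_singleton.2 fun he => hij (hinj hi hj he),
      fun i hi => ⟨_, rfl, _, rfl, by
        rw [iterate_succ_apply']
        exact hq.adj_parent _ trivial (hmoves i hi.le)⟩⟩
  have := hmodel.add_two_le hfix hcmp
  omega

lemma isDeconstruction (hq : IsNormalForest G Set.univ A q d) :
    IsDeconstruction G (parentGraph q) (fun v => {x | IterAncestor q x v}) := by
  refine ⟨?_, connSet_descendants⟩
  rintro g g' (rfl | hgg')
  · exact ⟨g, g, .inl rfl, .inl (.refl g), .inl (.refl g)⟩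
  rcases hq.comparable g trivial g' trivial hgg' with hg' | hg
  · exact ⟨g, g, .inl rfl, .inl (.refl g), .inl hg'⟩
  · exact ⟨g', g', .inl rfl, .inl hg, .inl (.refl g')⟩

end IsNormalForest

theorem TreeDepthLE.exists_forest_deconstruction {V : Type} [Fintype V] {G : SimpleGraph V}
    {h : ℕ} (htd : TreeDepthLE G h) :
    ∃ q : V → V, (parentGraph q).IsAcyclic ∧ parentGraph q ≤ G ∧
      IsDeconstruction G (parentGraph q) (fun v => {x | IterAncestor q x v}) ∧
      DeconWidthLE (parentGraph q) (fun v => {x | IterAncestor q x v}) (2 * (2 ^ (h + 1) + 1)) := by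
  obtain ⟨q, d, hq⟩ := exists_isNormalForest (G := G) Finset.univ Set.univ
    fun v _ => ⟨v, trivial, .refl (Finset.mem_coe.2 (Finset.mem_univ v))⟩
  rw [Finset.coe_univ] at hq
  refine ⟨q, parentGraph_isAcyclic d hq.depth_lt, parentGraph_le fun v => hq.adj_parent v trivial,
    hq.isDeconstruction, fun a b _ => ?_⟩
  have hbag := ncard_ancestors_le (hq.iterate_fixed_of_treeDepthLE htd)
  show ({x | IterAncestor q x a} ∪ {x | IterAncestor q x b}).ncard ≤ _
  have := Set.ncard_union_le {x | IterAncestor q x a} {x | IterAncestor q x b}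
  have := hbag a
  have := hbag b
  omega

lemma kAryTree_isAcyclic (d k : ℕ) : (kAryTree d k).IsAcyclic := by
  let tail : {l : List (Fin k) // l.length ≤ d} → {l : List (Fin k) // l.length ≤ d} :=
    fun l => ⟨l.1.tail, List.length_tail ▸ (Nat.sub_le _ 1).trans l.2⟩
  refine (parentGraph_isAcyclic (q := tail) (fun l => l.1.length) fun l hl => ?_).anti ?_
  · have hne : l.1 ≠ [] := fun h => hl (Subtype.ext (by simp [tail, h]))
    simpa [tail, List.length_tail] using List.length_pos_iff.2 hne
  · intro a b hab
    rw [kAryTree, fromRel_adj] at hab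
    refine parentGraph_adj.2 ⟨hab.1, ?_⟩
    rcases hab.2 with ⟨i, hb⟩ | ⟨i, ha⟩
    · exact .inr (Subtype.ext (by simp [tail, hb]))
    · exact .inl (Subtype.ext (by simp [tail, ha]))

lemma exists_finGraph_iso {β : Type} [Finite β] (M : SimpleGraph β) :
    ∃ F : FinGraph, Nonempty (F.G ≃g M) := by
  obtain ⟨n, ⟨e⟩⟩ := Finite.exists_equiv_fin β
  exact ⟨⟨n, M.comap e.symm⟩, ⟨Iso.comap e.symm M⟩⟩

lemma stackAll_forestMinors_iff (𝒢 : Set FinGraph) (d : ℕ) :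
    StackAll {M : FinGraph | M.G.IsAcyclic ∧ ∃ G ∈ 𝒢, IsMinor M G} d ↔ StackAll 𝒢 d := by
  refine ⟨fun hs k hk => ?_, fun hs k hk => ?_⟩
  · obtain ⟨H, ⟨-, G, hG, ν, hν⟩, μ, hμ⟩ := hs k hk
    exact ⟨G, hG, _, hμ.comp hν⟩
  · obtain ⟨G, hG, μ, hμ⟩ := hs k hk
    have : Finite {l : List (Fin k) // l.length ≤ d} := (List.finite_length_le _ d).to_subtype
    obtain ⟨F, ⟨e⟩⟩ := exists_finGraph_iso (kAryTree d k)
    exact ⟨F, ⟨e.isAcyclic_iff.2 (kAryTree_isAcyclic d k), G, hG, _,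
      (IsMinorMap.of_injective e.toHom e.injective).comp hμ⟩,
      _, IsMinorMap.of_injective e.symm.toHom e.symm.injective⟩

lemma forestHeightLE_of_isMinor {M G : FinGraph} {h : ℕ} (htd : TreeDepthLE G.G h)
    (hM : IsMinor M G) : forestHeightLE M (2 ^ (h + 1)) := by
  obtain ⟨par, hfix, hcmp⟩ := htd
  obtain ⟨μ, hμ⟩ := hM
  refine fun v => ⟨v, .refl v, fun u hu => ?_⟩
  obtain ⟨p, hp, hlen⟩ := hu.exists_path_of_dist
  have := (hμ.isPathModel_getVert hp).add_two_le hfix hcmp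
  omega

/-- if `𝒢` has bounded tree depth and `ℋ` is the class of all
forests that are minors of graphs in `𝒢`, then `ℋ` is a class of forests of
bounded height, `𝒢 ≡ ℋ`, and `𝒢` and `ℋ` have the same stack depth. -/
theorem graphs_to_forests (𝒢 : Set FinGraph) (hbtd : HasBoundedTreeDepth 𝒢)
    (ℋ : Set FinGraph)
    (hH : ℋ = {M : FinGraph | M.G.IsAcyclic ∧ ∃ G ∈ 𝒢, IsMinor M G}) :
    (∃ e : ℕ, ∀ H ∈ ℋ, forestHeightLE H e) ∧
    DeconEquiv 𝒢 ℋ ∧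
    (∀ d : ℕ, HasStackDepth 𝒢 d ↔ HasStackDepth ℋ d) := by
  obtain ⟨h, htd⟩ := hbtd
  subst hH
  refine ⟨⟨2 ^ (h + 1), ?_⟩, ⟨⟨2 * (2 ^ (h + 1) + 1), ?_⟩, ⟨2, ?_⟩⟩, fun d => ?_⟩
  · rintro H ⟨-, G, hG, hHG⟩
    exact forestHeightLE_of_isMinor (htd G hG) hHG
  · intro G hG
    obtain ⟨q, hacyc, hle, hdecon⟩ := (htd G hG).exists_forest_deconstruction
    exact ⟨⟨G.n, parentGraph q⟩,
      ⟨hacyc, G, hG, _, .of_injective (Hom.ofLE hle) injective_id⟩, _, hdecon⟩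
  · rintro H ⟨-, G, hG, μ, hμ⟩
    exact ⟨G, hG, _, hμ.isDeconstruction_preimage⟩
  · simp only [HasStackDepth, stackAll_forestMinors_iff]
end

section
/- Let σ be a finite relational first-order language, let v = (p_1,…,p_r) be a game vector, and let T and B be finite σ-structures such that T has a v-decomposition. If there exists a Duplicator winning strategy for the v-game on (T,B), then there is a homomorphism from T to B. -/
/-- A finite relational first-order language: a finite set of relation symbols,
each with an arity. -/
structure RelSig where
  symbols : Type
  ar : symbols → ℕ
  fin : Finite symbols

/-- A relational `σ`-structure. -/
structure RelStruct (σ : RelSig) where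
  carrier : Type
  rel : ∀ s : σ.symbols, (Fin (σ.ar s) → carrier) → Prop

/-- `h` is a homomorphism from `A` to `B`. -/
def IsRelHom {σ : RelSig} (A B : RelStruct σ) (h : A.carrier → B.carrier) : Prop :=
  ∀ (s : σ.symbols) (t : Fin (σ.ar s) → A.carrier),
    A.rel s t → B.rel s (fun i => h (t i))

/-- The domain of a partial map `α → Option β`. -/
def pdom {α β : Type} (f : α → Option β) : Set α := {a | f a ≠ none}

/-- `f` (a partial map) is a partial homomorphism from `A` to `B`: every tuple of
every relation of `A` all of whose entries lie in the domain of `f` is mapped to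
a tuple of the corresponding relation of `B`. -/
def IsPartialHom {σ : RelSig} (A B : RelStruct σ)
    (f : A.carrier → Option B.carrier) : Prop :=
  ∀ (s : σ.symbols) (t : Fin (σ.ar s) → A.carrier), A.rel s t →
    ∀ u : Fin (σ.ar s) → B.carrier, (∀ i, f (t i) = some (u i)) → B.rel s u

/-- A game vector `v = (p_1, …, p_r)` with `r ≥ 1` rounds; `p i` is the
(0-indexed) `i`-th entry, i.e. `p_{i+1}`. -/
structure GameVec where
  r : ℕ
  hr : 1 ≤ r
  p : ℕ → ℕ

/-- There is a Duplicator winning strategy `W_1, …, W_r` (0-indexed here as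
`W 0, …, W (r-1)`) for the `v`-game on `(A, B)`. -/
def DuplicatorWins {σ : RelSig} (v : GameVec) (A B : RelStruct σ) : Prop :=
  ∃ W : ℕ → Set (A.carrier → Option B.carrier),
    (∀ i, i < v.r → ∀ g ∈ W i, IsPartialHom A B g) ∧
    (∀ S : Set A.carrier, S.ncard ≤ v.p 0 → ∃ g ∈ W 0, pdom g = S) ∧
    (∀ i, i + 1 < v.r → ∀ g ∈ W i, ∀ S : Set A.carrier, pdom g ⊆ S →
      (S \ pdom g).ncard ≤ v.p (i + 1) →
      ∃ g' ∈ W (i + 1), pdom g' = S ∧ ∀ a ∈ pdom g, g' a = g a)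

/-- A finite rooted forest, given by a parent function on `Fin m`; roots are the
fixed points, and from every vertex iterating the parent function reaches a root. -/
structure RootedForest where
  m : ℕ
  par : Fin m → Fin m
  wf : ∀ x : Fin m, ∃ k : ℕ, par^[k + 1] x = par^[k] x

/-- The depth of a node (number of edges on the path to its root); roots have
depth `0`, so a node at depth `i` is at level `i + 1`. -/
def RootedForest.depth (F : RootedForest) (x : Fin F.m) : ℕ := Nat.find (F.wf x)

/-- The underlying (simple) graph of a rooted forest. -/
def RootedForest.graph (F : RootedForest) : SimpleGraph (Fin F.m) :=
  SimpleGraph.fromRel (fun x y => F.par x = y)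

/-- `(B h)_h` (indexed by the rooted forest `F` of height `< v.r`) is a
`v`-decomposition of the structure `A`. -/
def IsVDecomp {σ : RelSig} (v : GameVec) (A : RelStruct σ) (F : RootedForest)
    (B : Fin F.m → Set A.carrier) : Prop :=
  (∀ x, F.depth x < v.r) ∧
  (∀ (s : σ.symbols) (t : Fin (σ.ar s) → A.carrier), A.rel s t →
    ∃ h, ∀ i, t i ∈ B h) ∧
  (∀ a : A.carrier, ((F.graph).induce {h | a ∈ B h}).Connected) ∧
  (∀ x, F.par x = x → (B x).ncard ≤ v.p 0) ∧
  (∀ x, F.par x ≠ x →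
    B (F.par x) ⊆ B x ∧ (B x \ B (F.par x)).ncard ≤ v.p (F.depth x))

/-- `A` has a `v`-decomposition. -/
def HasVDecomp {σ : RelSig} (v : GameVec) (A : RelStruct σ) : Prop :=
  ∃ (F : RootedForest) (B : Fin F.m → Set A.carrier), IsVDecomp v A F B

/-- A set vector `(C_1, …, C_m)` of the game vector `v` (as a list, head = `C_1`). -/
def IsSetVec (v : GameVec) {α : Type} (s : List (Set α)) : Prop :=
  1 ≤ s.length ∧ s.length ≤ v.r ∧ (s.getD 0 ∅).ncard ≤ v.p 0 ∧
  ∀ i, i + 1 < s.length →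
    s.getD i ∅ ⊆ s.getD (i + 1) ∅ ∧
    (s.getD (i + 1) ∅ \ s.getD i ∅).ncard ≤ v.p (i + 1)

/-- The structure `T_v(A)`: its universe is the union over all set vectors `s`
of the bags `B_s = {(a, u(a,s)) : a ∈ C_m}`, where `u(a,s)` is the shortest
prefix of `s` whose last entry contains `a`; equivalently, it consists of the
pairs `(a, u)` where `u` is a set vector whose last entry contains `a` and none
of whose earlier entries contains `a`.  A tuple is in `R^{T_v(A)}` iff its tuple
of first coordinates is in `R^A`. -/
def TvA {σ : RelSig} (v : GameVec) (A : RelStruct σ) : RelStruct σ where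
  carrier := {q : A.carrier × List (Set A.carrier) //
    IsSetVec v q.2 ∧ q.1 ∈ q.2.getLastD ∅ ∧
    ∀ i, i + 1 < q.2.length → q.1 ∉ q.2.getD i ∅}
  rel := fun s t => A.rel s (fun i => (t i).1.1)

/-- `C` is a core: every homomorphism from `C` to itself is injective. -/
def IsCoreStruct {σ : RelSig} (C : RelStruct σ) : Prop :=
  ∀ h : C.carrier → C.carrier, IsRelHom C C h → Function.Injective h

/-- `C` is (a copy of) the core of `A`: `C` is a core, there is a homomorphism
from `A` to `C`, and `C` is a substructure of `A` (its universe embeds into that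
of `A`, with each relation of `C` carried into the corresponding relation of `A`). -/
def IsCoreOf {σ : RelSig} (C A : RelStruct σ) : Prop :=
  IsCoreStruct C ∧ (∃ h : A.carrier → C.carrier, IsRelHom A C h) ∧
  ∃ ι : C.carrier → A.carrier, Function.Injective ι ∧
    ∀ (s : σ.symbols) (t : Fin (σ.ar s) → C.carrier),
      C.rel s t → A.rel s (fun i => ι (t i))

/-!
Walk down the decomposition forest choosing, for every bag, a position of Duplicator's strategy
whose domain is that bag: a root bag is a legal first move, and a child bag adds at most
`p_{i+1}` new elements to its parent's bag, so the strategy extends the parent's map to it.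
Neighbouring bags thus carry maps that agree on common elements, and since the bags containing
a fixed element form a connected subforest, all maps defined at that element agree there. The
maps glue to a total map, which is a homomorphism because every tuple of a relation lies in a
bag, where the glued map coincides with a partial homomorphism.
-/

namespace RootedForest

variable (F : RootedForest)

theorem depth_eq_zero_iff {x : Fin F.m} : F.depth x = 0 ↔ F.par x = x := by
  simp [depth, Nat.find_eq_zero]

theorem depth_eq_depth_par_add_one {x : Fin F.m} (h : F.par x ≠ x) :
    F.depth x = F.depth (F.par x) + 1 := by
  have iterate_par : ∀ k, F.par^[k] (F.par x) = F.par^[k + 1] x := fun k =>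
    (Function.iterate_succ_apply F.par k x).symm
  have hpos : F.depth x ≠ 0 := fun h0 => h (F.depth_eq_zero_iff.mp h0)
  have hle : F.depth (F.par x) ≤ F.depth x - 1 := by
    apply Nat.find_le
    rw [iterate_par, iterate_par, Nat.sub_add_cancel (Nat.one_le_iff_ne_zero.mpr hpos)]
    exact Nat.find_spec (F.wf x)
  have hge : F.depth x ≤ F.depth (F.par x) + 1 := by
    apply Nat.find_le
    have hroot_par := Nat.find_spec (F.wf (F.par x))
    rwa [iterate_par, iterate_par] at hroot_par
  omega

section Recursion

variable {γ : Type*} (P : Fin F.m → γ → Prop) (E : γ → γ → Prop)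
  (hroot : ∀ x, F.par x = x → ∃ g, P x g)
  (hchild : ∀ x, F.par x ≠ x → ∀ g, P (F.par x) g → ∃ g', P x g' ∧ E g g')

noncomputable def chooseDown (x : Fin F.m) : {g : γ // P x g} :=
  if h : F.par x = x then ⟨_, (hroot x h).choose_spec⟩
  else
    let g := chooseDown (F.par x)
    ⟨_, (hchild x h g.1 g.2).choose_spec.1⟩
termination_by F.depth x
decreasing_by rw [F.depth_eq_depth_par_add_one h]; omega

theorem chooseDown_rel_par {x : Fin F.m} (h : F.par x ≠ x) :
    E (F.chooseDown P E hroot hchild (F.par x)).1 (F.chooseDown P E hroot hchild x).1 := by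
  rw [chooseDown.eq_def (x := x)]
  simp only [h, dite_false]
  exact (hchild x h _ (F.chooseDown P E hroot hchild (F.par x)).2).choose_spec.2

end Recursion

theorem exists_family_rel_par {γ : Type*} (P : Fin F.m → γ → Prop) (E : γ → γ → Prop)
    (hroot : ∀ x, F.par x = x → ∃ g, P x g)
    (hchild : ∀ x, F.par x ≠ x → ∀ g, P (F.par x) g → ∃ g', P x g' ∧ E g g') :
    ∃ G : Fin F.m → γ, (∀ x, P x (G x)) ∧ ∀ x, F.par x ≠ x → E (G (F.par x)) (G x) :=
  ⟨fun x => (F.chooseDown P E hroot hchild x).1, fun x => (F.chooseDown P E hroot hchild x).2,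
    fun _ h => F.chooseDown_rel_par P E hroot hchild h⟩

end RootedForest

theorem SimpleGraph.Preconnected.apply_eq_of_forall_adj {V β : Type*} {G : SimpleGraph V}
    (hG : G.Preconnected) (f : V → β) (hf : ∀ x y, G.Adj x y → f x = f y) (x y : V) :
    f x = f y := by
  obtain ⟨w⟩ := hG x y
  induction w with
  | nil => rfl
  | cons h _ ih => exact (hf _ _ h).trans ih

theorem RootedForest.apply_eq_of_mem_of_mem {α β : Type*} (F : RootedForest)
    {Bg : Fin F.m → Set α} (hconn : ∀ a, (F.graph.induce {h | a ∈ Bg h}).Connected)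
    (G : Fin F.m → α → β) (hpar : ∀ x, F.par x ≠ x → ∀ a ∈ Bg (F.par x), G x a = G (F.par x) a)
    {a : α} {x y : Fin F.m} (hx : a ∈ Bg x) (hy : a ∈ Bg y) : G x a = G y a := by
  refine (hconn a).preconnected.apply_eq_of_forall_adj (fun z => G z.1 a) ?_ ⟨x, hx⟩ ⟨y, hy⟩
  rintro ⟨u, hu⟩ ⟨w, hw⟩ hadj
  simp only [SimpleGraph.comap_adj, Function.Embedding.coe_subtype, graph,
    SimpleGraph.fromRel_adj] at hadj
  obtain ⟨hne, rfl | rfl⟩ := hadj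
  · exact hpar u (Ne.symm hne) a hw
  · exact (hpar w hne a hu).symm

theorem exists_forall_eq_some_of_compatible {ι : Type*} {α β : Type} (f : ι → α → Option β)
    (hcover : ∀ a, ∃ i, a ∈ pdom (f i))
    (hcompat : ∀ i j a, a ∈ pdom (f i) → a ∈ pdom (f j) → f i a = f j a) :
    ∃ h : α → β, ∀ i, ∀ a ∈ pdom (f i), f i a = some (h a) := by
  have hval : ∀ a, ∃ b, ∀ i, a ∈ pdom (f i) → f i a = some b := by
    intro a
    obtain ⟨i₀, hi₀⟩ := hcover a
    obtain ⟨b, hb⟩ := Option.ne_none_iff_exists'.mp hi₀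
    exact ⟨b, fun i hi => (hcompat i i₀ a hi hi₀).trans hb⟩
  choose h hh using hval
  exact ⟨h, fun i a ha => hh a i ha⟩

theorem isRelHom_of_forall_rel_exists_isPartialHom {σ : RelSig} {A B : RelStruct σ}
    (h : A.carrier → B.carrier)
    (hloc : ∀ s t, A.rel s t → ∃ f, IsPartialHom A B f ∧ ∀ i, f (t i) = some (h (t i))) :
    IsRelHom A B h := by
  intro s t ht
  obtain ⟨f, hf, hft⟩ := hloc s t ht
  exact hf s t ht _ hft

theorem strategy_to_hom_general (σ : RelSig) (v : GameVec) (T B : RelStruct σ)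
    (hdec : HasVDecomp v T) (hwin : DuplicatorWins v T B) :
    ∃ h : T.carrier → B.carrier, IsRelHom T B h := by
  obtain ⟨F, Bg, hdepth, hcover, hconn, hroot, hchild⟩ := hdec
  obtain ⟨W, hpartial, hfirst, hnext⟩ := hwin
  obtain ⟨G, hGW, hGpar⟩ := F.exists_family_rel_par
    (fun x g => g ∈ W (F.depth x) ∧ pdom g = Bg x) (fun g g' => ∀ a ∈ pdom g, g' a = g a)
    (fun x hx => by simpa [F.depth_eq_zero_iff.mpr hx] using hfirst (Bg x) (hroot x hx))
    (by
      rintro x hx g ⟨hgW, hg⟩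
      obtain ⟨hsub, hcard⟩ := hchild x hx
      have hdx := F.depth_eq_depth_par_add_one hx
      rw [← hg] at hsub hcard
      rw [hdx] at hcard ⊢
      obtain ⟨g', hg'W, hg'dom, hg'ext⟩ := hnext _ (hdx ▸ hdepth x) g hgW (Bg x) hsub hcard
      exact ⟨g', ⟨hg'W, hg'dom⟩, hg'ext⟩)
  obtain ⟨h, hh⟩ := exists_forall_eq_some_of_compatible G
    (fun a => by
      obtain ⟨⟨x, hx⟩⟩ := (hconn a).nonempty
      exact ⟨x, (hGW x).2 ▸ hx⟩)
    (fun x y a hx hy => F.apply_eq_of_mem_of_mem hconn G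
      (fun z hz a ha => hGpar z hz a ((hGW _).2 ▸ ha)) ((hGW x).2 ▸ hx) ((hGW y).2 ▸ hy))
  refine ⟨h, isRelHom_of_forall_rel_exists_isPartialHom h fun s t ht => ?_⟩
  obtain ⟨x, hx⟩ := hcover s t ht
  exact ⟨G x, hpartial _ (hdepth x) _ (hGW x).1, fun i => hh x _ ((hGW x).2 ▸ hx i)⟩

/-- if `T` has a `v`-decomposition and Duplicator wins the
`v`-game on `(T, B)`, then there is a homomorphism from `T` to `B`. -/
theorem strategy_to_hom (σ : RelSig) (v : GameVec) (T B : RelStruct σ)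
    (hT : Finite T.carrier) (hB : Finite B.carrier)
    (hdec : HasVDecomp v T) (hwin : DuplicatorWins v T B) :
    ∃ h : T.carrier → B.carrier, IsRelHom T B h :=
  strategy_to_hom_general σ v T B hdec hwin
end
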